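/- Let n ≥ 3 with n ≡ 2 (mod 12), and define the integer sequence a_1 = n-1, a_2 = n(n-2), a_{i+2} = (2n-1)a_{i+1} - (n^2-n+1)a_i. Then gcd(n^n, a_n) = 2^{1+ν_2(⌊n/12⌋)}·n^2, where ν_2(m) denotes the 2-adic valuation of m. -/

import Mathlib

structure Eis : Type where
  re : ℤ
  im : ℤ

namespace Eis

@[ext] theorem ext' : ∀ {x y : Eis}, x.re = y.re → x.im = y.im → x = y
  | ⟨_,_⟩, ⟨_,_⟩, rfl, rfl => rfl

instance : Zero Eis := ⟨⟨0,0⟩⟩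
instance : One Eis := ⟨⟨1,0⟩⟩
instance : Add Eis := ⟨fun x y => ⟨x.re+y.re, x.im+y.im⟩⟩
instance : Neg Eis := ⟨fun x => ⟨-x.re, -x.im⟩⟩
instance : Mul Eis := ⟨fun x y => ⟨x.re*y.re - x.im*y.im, x.re*y.im + x.im*y.re - x.im*y.im⟩⟩

@[simp] theorem zero_re : (0:Eis).re = 0 := rfl
@[simp] theorem zero_im : (0:Eis).im = 0 := rfl
@[simp] theorem one_re : (1:Eis).re = 1 := rfl
@[simp] theorem one_im : (1:Eis).im = 0 := rfl
@[simp] theorem add_re (x y : Eis) : (x+y).re = x.re + y.re := rfl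
@[simp] theorem add_im (x y : Eis) : (x+y).im = x.im + y.im := rfl
@[simp] theorem neg_re (x : Eis) : (-x).re = -x.re := rfl
@[simp] theorem neg_im (x : Eis) : (-x).im = -x.im := rfl
@[simp] theorem mul_re (x y : Eis) : (x*y).re = x.re*y.re - x.im*y.im := rfl
@[simp] theorem mul_im (x y : Eis) : (x*y).im = x.re*y.im + x.im*y.re - x.im*y.im := rfl

instance : NatCast Eis := ⟨fun k => ⟨k, 0⟩⟩
instance : IntCast Eis := ⟨fun z => ⟨z, 0⟩⟩

@[simp] theorem natCast_re (k : ℕ) : ((k:ℕ) : Eis).re = k := rfl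
@[simp] theorem natCast_im (k : ℕ) : ((k:ℕ) : Eis).im = 0 := rfl
@[simp] theorem intCast_re (z : ℤ) : ((z:ℤ) : Eis).re = z := rfl
@[simp] theorem intCast_im (z : ℤ) : ((z:ℤ) : Eis).im = 0 := rfl

instance commRing : CommRing Eis where
  add_assoc := by intros; ext <;> simp <;> ring
  zero_add := by intros; ext <;> simp
  add_zero := by intros; ext <;> simp
  add_comm := by intros; ext <;> simp <;> ring
  neg_add_cancel := by intros; ext <;> simp
  mul_assoc := by intros; ext <;> simp <;> ring
  one_mul := by intros; ext <;> simp
  mul_one := by intros; ext <;> simp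
  left_distrib := by intros; ext <;> simp <;> ring
  right_distrib := by intros; ext <;> simp <;> ring
  zero_mul := by intros; ext <;> simp
  mul_zero := by intros; ext <;> simp
  mul_comm := by intros; ext <;> simp <;> ring
  natCast := Nat.cast
  natCast_zero := by ext <;> simp
  natCast_succ := by intros; ext <;> simp
  intCast := Int.cast
  intCast_ofNat := by intros; ext <;> simp
  intCast_negSucc := by intros; ext <;> simp [Int.negSucc_eq]
  nsmul := fun k x => ⟨k * x.re, k * x.im⟩
  nsmul_zero := by intros; ext <;> simp [HSMul.hSMul, SMul.smul]
  nsmul_succ := by intros; ext <;> simp [HSMul.hSMul, SMul.smul] <;> ring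
  zsmul := fun k x => ⟨k * x.re, k * x.im⟩
  zsmul_zero' := by intros; ext <;> simp [HSMul.hSMul, SMul.smul]
  zsmul_succ' := by intros; ext <;> simp [HSMul.hSMul, SMul.smul] <;> ring
  zsmul_neg' := by intros; ext <;> simp [Int.negSucc_eq, HSMul.hSMul, SMul.smul] <;> ring

@[simp] theorem ofNat_re (k : ℕ) [k.AtLeastTwo] :
    (OfNat.ofNat k : Eis).re = OfNat.ofNat k := rfl
@[simp] theorem ofNat_im (k : ℕ) [k.AtLeastTwo] : (OfNat.ofNat k : Eis).im = 0 := rfl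

def om : Eis := ⟨0,1⟩

@[simp] theorem om_re : om.re = 0 := rfl
@[simp] theorem om_im : om.im = 1 := rfl

theorem om_cube : om ^ 3 = 1 := by
  ext <;> simp [pow_succ]

theorem om_pow_mod (k : ℕ) : om ^ k = om ^ (k % 3) := by
  conv_lhs => rw [← Nat.div_add_mod k 3]
  rw [pow_add, pow_mul, om_cube, one_pow, one_mul]

def imHom : Eis →+ ℤ := { toFun := Eis.im, map_zero' := rfl, map_add' := fun _ _ => rfl }

@[simp] theorem imHom_apply (x : Eis) : imHom x = x.im := rfl

end Eis
section aux
open Eis Finset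

/-- v₂(k!) ≤ k - 1 for k ≥ 1 -/
theorem val2_factorial_le : ∀ k : ℕ, 1 ≤ k → padicValNat 2 (k.factorial) + 1 ≤ k := by
  haveI : Fact (Nat.Prime 2) := ⟨Nat.prime_two⟩
  intro k
  induction k using Nat.strong_induction_on with
  | _ k ih =>
    intro hk
    rcases Nat.lt_or_ge k 2 with h2 | h2
    · interval_cases k
      · simp
    · have hq : k = 2 * (k/2) + k % 2 := (Nat.div_add_mod k 2).symm
      have hq1 : 1 ≤ k / 2 := Nat.one_le_div_iff (by norm_num) |>.mpr h2
      have hlt : k / 2 < k := Nat.div_lt_self (by omega) (by norm_num)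
      have h1 : padicValNat 2 (k.factorial) = padicValNat 2 ((2 * (k/2)).factorial) := by
        conv_lhs => rw [hq]
        exact padicValNat_factorial_mul_add (k/2) (Nat.mod_lt k (by norm_num))
      have h2' : padicValNat 2 ((2 * (k/2)).factorial)
          = padicValNat 2 ((k/2).factorial) + k/2 := padicValNat_factorial_mul (k/2)
      have := ih (k/2) hlt hq1
      omega

theorem descFactorial_dvd {n : ℕ} : ∀ {a b : ℕ}, a ≤ b → n.descFactorial a ∣ n.descFactorial b := by
  intro a b h
  induction b with
  | zero => simp_all
  | succ b ihb =>
    rcases Nat.eq_or_lt_of_le h with rfl | h'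
    · rfl
    · exact (ihb (by omega)).trans ((Nat.descFactorial_succ n b) ▸ dvd_mul_left _ _)

/-- key 2-adic divisibility of the tail terms -/
theorem term_dvd2 (t k : ℕ) (ht : 0 < t) (hk3 : 3 ≤ k) (hkn : k ≤ 12*t+2) :
    2 ^ (padicValNat 2 t + 2) ∣ (12*t+2).choose k * (12*t+2) ^ (k-2) := by
  haveI : Fact (Nat.Prime 2) := ⟨Nat.prime_two⟩
  set n := 12*t+2 with hn
  set V := padicValNat 2 t with hV
  have hC : n.choose k ≠ 0 := (Nat.choose_pos hkn).ne'
  have hP : n ^ (k-2) ≠ 0 := pow_ne_zero _ (by omega)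
  -- v2 n = 1
  have hvn : padicValNat 2 n = 1 := by
    have : n = 2 * (6*t+1) := by omega
    rw [this, padicValNat.mul (by norm_num) (by omega),
      padicValNat.self (by norm_num), padicValNat.eq_zero_of_not_dvd (by omega)]
  -- v2 (n-2) = V + 2
  have hvn2 : padicValNat 2 (n-2) = V + 2 := by
    have h4 : n - 2 = 2^2 * (3*t) := by omega
    rw [h4, padicValNat.mul (by norm_num) (by omega), padicValNat.prime_pow,
      padicValNat.mul (by norm_num) (by omega),
      padicValNat.eq_zero_of_not_dvd (by omega), hV]
    omega
  -- n*(n-1)*(n-2) divides descFactorial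
  have hd3 : n.descFactorial 3 ∣ n.descFactorial k := descFactorial_dvd hk3
  have hdesc3 : n.descFactorial 3 = (n-2) * ((n-1) * n) := by
    simp [Nat.descFactorial_succ]
  have hdesc_ne : n.descFactorial k ≠ 0 := by
    simp only [ne_eq, Nat.descFactorial_eq_zero_iff_lt]; omega
  -- v2 desc ≥ V+3
  have hvdesc : V + 3 ≤ padicValNat 2 (n.descFactorial k) := by
    obtain ⟨c, hc⟩ := hd3
    have hc0 : c ≠ 0 := by rintro rfl; simp [hc] at hdesc_ne
    have hne2 : n - 2 ≠ 0 := by omega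
    have hne1 : n - 1 ≠ 0 := by omega
    have hne0 : n ≠ 0 := by omega
    rw [hc, hdesc3,
      padicValNat.mul (Nat.mul_ne_zero hne2 (Nat.mul_ne_zero hne1 hne0)) hc0,
      padicValNat.mul hne2 (Nat.mul_ne_zero hne1 hne0),
      padicValNat.mul hne1 hne0, hvn2,
      padicValNat.eq_zero_of_not_dvd (show ¬ 2 ∣ (n-1) by omega), hvn]
    omega
  -- v2(k!) + v2(choose) = v2(desc)
  have hsplit : padicValNat 2 (k.factorial) + padicValNat 2 (n.choose k)
      = padicValNat 2 (n.descFactorial k) := by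
    rw [Nat.descFactorial_eq_factorial_mul_choose,
      padicValNat.mul (Nat.factorial_ne_zero k) hC]
  have hfact := val2_factorial_le k (by omega)
  have hvP : padicValNat 2 (n ^ (k-2)) = k - 2 := by
    rw [padicValNat.pow, hvn, mul_one]
  have hgoal : V + 2 ≤ padicValNat 2 (n.choose k * n ^ (k-2)) := by
    rw [padicValNat.mul hC hP, hvP]
    omega
  calc 2^(V+2) ∣ 2 ^ padicValNat 2 (n.choose k * n ^ (k-2)) := pow_dvd_pow 2 hgoal
    _ ∣ _ := pow_padicValNat_dvd

end aux
section seq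
open Eis Finset

@[simp] theorem Eis.sub_im (x y : Eis) : (x - y).im = x.im - y.im := by
  rw [sub_eq_add_neg, sub_eq_add_neg]; simp

@[simp] theorem Eis.sub_re (x y : Eis) : (x - y).re = x.re - y.re := by
  rw [sub_eq_add_neg, sub_eq_add_neg]; simp

theorem Eis.intCast_mul_im (z : ℤ) (w : Eis) : ((z : Eis) * w).im = z * w.im := by simp

/-- the quadratic relation satisfied by n + ω -/
theorem x_sq (n : ℕ) : ((n:Eis) + om)^2 =
    ((2*(n:ℤ)-1 : ℤ) : Eis) * ((n:Eis)+om) - (((n:ℤ)^2-(n:ℤ)+1 : ℤ) : Eis) := by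
  ext <;>
    simp only [Eis.mul_re, Eis.mul_im, Eis.add_re, Eis.add_im, Eis.sub_re, Eis.sub_im,
      Eis.intCast_re, Eis.intCast_im, Eis.natCast_re, Eis.natCast_im, Eis.om_re, Eis.om_im,
      pow_two] <;>
    ring

theorem seq_one (n : ℕ) : (om * ((n:Eis)+om)^1).im = (n:ℤ) - 1 := by
  simp

theorem seq_two (n : ℕ) : (om * ((n:Eis)+om)^2).im = (n:ℤ) * ((n:ℤ) - 2) := by
  simp [pow_two]; ring

theorem seq_rec (n : ℕ) (i : ℕ) :
    (om * ((n:Eis)+om)^(i+2)).im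
      = (2*(n:ℤ)-1) * (om * ((n:Eis)+om)^(i+1)).im
        - ((n:ℤ)^2-(n:ℤ)+1) * (om * ((n:Eis)+om)^i).im := by
  have h : om * ((n:Eis)+om)^(i+2)
      = ((2*(n:ℤ)-1 : ℤ):Eis) * (om * ((n:Eis)+om)^(i+1))
        - (((n:ℤ)^2-(n:ℤ)+1 : ℤ):Eis) * (om * ((n:Eis)+om)^i) := by
    calc om * ((n:Eis)+om)^(i+2) = (om * ((n:Eis)+om)^i) * ((n:Eis)+om)^2 := by ring
      _ = (om * ((n:Eis)+om)^i) *
          (((2*(n:ℤ)-1 : ℤ) : Eis) * ((n:Eis)+om) - (((n:ℤ)^2-(n:ℤ)+1 : ℤ) : Eis)) := by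
          rw [x_sq]
      _ = _ := by ring
  rw [h, Eis.sub_im, Eis.intCast_mul_im, Eis.intCast_mul_im]

/-- binomial expansion of the im-part -/
theorem seq_expand (n N : ℕ) : (om * ((n:Eis)+om)^N).im
    = ∑ k ∈ Finset.range (N+1), (N.choose k : ℤ) * (n:ℤ)^k * (om^(N-k+1)).im := by
  rw [add_pow, Finset.mul_sum, ← Eis.imHom_apply, map_sum]
  refine Finset.sum_congr rfl fun k hk => ?_
  have h : om * ((n:Eis)^k * om^(N-k) * ((N.choose k : ℕ) : Eis))
      = (((N.choose k : ℤ) * (n:ℤ)^k : ℤ) : Eis) * om^(N-k+1) := by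
    push_cast
    ring
  rw [Eis.imHom_apply, h, Eis.intCast_mul_im]

/-- evaluation of (ω^(N-k+1)).im when N ≡ 2 mod 3 -/
theorem om_eval (N k : ℕ) (hN : N % 3 = 2) (hk : k ≤ N) :
    (om^(N-k+1)).im = if k % 3 = 0 then 0 else if k % 3 = 1 then -1 else 1 := by
  have h3 : k % 3 = 0 ∨ k % 3 = 1 ∨ k % 3 = 2 := by omega
  rcases h3 with h|h|h
  · rw [Eis.om_pow_mod, show (N-k+1)%3 = 0 by omega]
    simp [h]
  · rw [Eis.om_pow_mod, show (N-k+1)%3 = 2 by omega]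
    simp [h, pow_succ]
  · rw [Eis.om_pow_mod, show (N-k+1)%3 = 1 by omega]
    simp [h]

end seq
open Eis Finset in
theorem stmtX (n : ℕ) (hn : 3 ≤ n) (a : ℕ → ℤ)
    (h1 : a 1 = n - 1) (h2 : a 2 = n * (n - 2))
    (hrec : ∀ i : ℕ, 1 ≤ i →
      a (i + 2) = (2 * n - 1) * a (i + 1) - (n ^ 2 - n + 1) * a i) :
    n % 12 = 2 →
    Int.gcd ((n : ℤ) ^ n) (a n) = 2 ^ (1 + padicValNat 2 (n / 12)) * n ^ 2 := by
  intro hmod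
  haveI : Fact (Nat.Prime 2) := ⟨Nat.prime_two⟩
  set t := n / 12 with ht
  have hnt : n = 12 * t + 2 := by omega
  have ht1 : 1 ≤ t := by omega
  set V := padicValNat 2 t with hV
  set t' := t / 2 ^ V with ht'
  have htt' : t = 2 ^ V * t' := by
    rw [ht', hV, ← Nat.factorization_def t Nat.prime_two]
    exact (Nat.ordProj_mul_ordCompl_eq_self t 2).symm
  have ht'odd : ¬ 2 ∣ t' := by
    rw [ht', hV, ← Nat.factorization_def t Nat.prime_two]
    exact Nat.not_dvd_ordCompl Nat.prime_two (by omega)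
  set m := 6 * t + 1 with hm
  have hnm : n = 2 * m := by omega
  -- identify a with the Eisenstein sequence
  have haseq : ∀ i, 1 ≤ i → a i = (om * ((n:Eis)+om)^i).im ∧
      a (i+1) = (om * ((n:Eis)+om)^(i+1)).im := by
    intro i hi
    induction i, hi using Nat.le_induction with
    | base => exact ⟨by rw [h1, seq_one], by rw [h2, seq_two]⟩
    | succ i hi ihp =>
      refine ⟨ihp.2, ?_⟩
      rw [hrec i hi, seq_rec, ihp.1, ihp.2]
  have han : a n = (om * ((n:Eis)+om)^n).im := (haseq n (by omega)).1
  rw [seq_expand] at han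
  have han2 : a n = ∑ k ∈ Finset.range (n+1), (n.choose k : ℤ) * (n:ℤ)^k *
      (if k % 3 = 0 then 0 else if k % 3 = 1 then -1 else 1) := by
    rw [han]
    refine Finset.sum_congr rfl fun k hk => ?_
    rw [om_eval n k (by omega) (by simp only [Finset.mem_range] at hk; omega)]
  rw [Finset.range_eq_Ico,
    ← Finset.sum_Ico_consecutive _ (show 0 ≤ 3 by omega) (show 3 ≤ n+1 by omega)] at han2
  -- the head part of the sum
  have hch2 : (n.choose 2 : ℤ) = (m:ℤ) * ((n:ℤ)-1) := by
    have hc : n.choose 2 = m * (n-1) := by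
      rw [Nat.choose_two_right, hnm, mul_assoc, Nat.mul_div_cancel_left _ (by norm_num : 0 < 2)]
    rw [hc]
    push_cast [Nat.cast_sub (show 1 ≤ n by omega)]
    ring
  have hfirst : ∑ k ∈ Finset.Ico 0 3, (n.choose k : ℤ) * (n:ℤ)^k *
      (if k % 3 = 0 then 0 else if k % 3 = 1 then -1 else 1)
      = -(n:ℤ)^2 + (m:ℤ)*((n:ℤ)-1)*(n:ℤ)^2 := by
    rw [← Finset.range_eq_Ico, Finset.sum_range_succ, Finset.sum_range_succ,
      Finset.sum_range_succ, Finset.sum_range_zero]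
    norm_num [hch2, Nat.choose_one_right]
    ring
  -- the tail
  set S : ℤ := ∑ k ∈ Finset.Ico 3 (n+1), (n.choose k : ℤ) * (n:ℤ)^(k-2) *
      (if k % 3 = 0 then 0 else if k % 3 = 1 then -1 else 1) with hS
  have htail : ∑ k ∈ Finset.Ico 3 (n+1), (n.choose k : ℤ) * (n:ℤ)^k *
      (if k % 3 = 0 then 0 else if k % 3 = 1 then -1 else 1) = (n:ℤ)^2 * S := by
    rw [hS, Finset.mul_sum]
    refine Finset.sum_congr rfl fun k hk => ?_
    simp only [Finset.mem_Ico] at hk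
    rw [show (n:ℤ)^k = (n:ℤ)^2 * (n:ℤ)^(k-2) by rw [← pow_add]; congr 1; omega]
    ring
  have hSdvd2 : (2:ℤ)^(V+2) ∣ S := by
    rw [hS]
    refine Finset.dvd_sum fun k hk => ?_
    simp only [Finset.mem_Ico] at hk
    have hd := term_dvd2 t k ht1 hk.1 (by omega)
    rw [← hnt] at hd
    have hd' : (2:ℤ)^(V+2) ∣ ((n.choose k * n^(k-2) : ℕ) : ℤ) := by
      exact_mod_cast Int.natCast_dvd_natCast.mpr hd
    have heq : (n.choose k : ℤ) * (n:ℤ)^(k-2) *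
        (if k % 3 = 0 then (0:ℤ) else if k % 3 = 1 then -1 else 1)
        = ((n.choose k * n^(k-2) : ℕ) : ℤ) *
          (if k % 3 = 0 then (0:ℤ) else if k % 3 = 1 then -1 else 1) := by
      push_cast; ring
    rw [heq]
    exact hd'.mul_right _
  have hSdvdm : (m:ℤ) ∣ S := by
    rw [hS]
    refine Finset.dvd_sum fun k hk => ?_
    simp only [Finset.mem_Ico] at hk
    have hmn : (m:ℤ) ∣ (n:ℤ) := ⟨2, by rw [hnm]; push_cast; ring⟩
    have : (m:ℤ) ∣ (n:ℤ)^(k-2) := dvd_pow hmn (by omega)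
    exact (this.mul_left _).mul_right _
  -- assemble
  set u : ℤ := -1 + (m:ℤ)*((n:ℤ)-1) + S with hu
  have hanu : a n = (n:ℤ)^2 * u := by
    rw [han2, hfirst, htail, hu]; ring
  obtain ⟨w, hw⟩ := hSdvd2
  set z : ℤ := 9*(t':ℤ)*(4*(t:ℤ)+1) + 2*w with hz
  have huz : u = 2^(V+1) * z := by
    rw [hu, hw, hz]
    have h1 : (m:ℤ) = 6*(t:ℤ)+1 := by rw [hm]; push_cast; ring
    have h2 : (n:ℤ) = 12*(t:ℤ)+2 := by rw [hnt]; push_cast; ring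
    have h3 : (t:ℤ) = 2^V * (t':ℤ) := by rw [htt']; push_cast; ring
    rw [h1, h2, h3]
    ring
  -- z is odd
  have hcodd : (9 * t' * (4*t+1)) % 2 = 1 := by
    have h9 : Even (9 * t' * (4*t+1)) ↔ ((Even 9 ∨ Even t') ∨ Even (4*t+1)) := by
      simp [Nat.even_mul]
    have ht'2 : t' % 2 = 1 := by omega
    rw [Nat.even_iff, Nat.even_iff, Nat.even_iff, Nat.even_iff] at h9
    omega
  have hzodd : ¬ (2:ℤ) ∣ z := by
    have hc : ((9 * t' * (4*t+1) : ℕ) : ℤ) % 2 = 1 := by exact_mod_cast hcodd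
    have hzc : z = ((9 * t' * (4*t+1) : ℕ) : ℤ) + 2*w := by rw [hz]; push_cast; ring
    omega
  -- z is coprime to m
  have hum : (m:ℤ) ∣ u + 1 := by
    rw [hu]
    have : (-1:ℤ) + (m:ℤ)*((n:ℤ)-1) + S + 1 = (m:ℤ)*((n:ℤ)-1) + S := by ring
    rw [this]
    exact dvd_add (Dvd.intro _ rfl) hSdvdm
  have hcopum : IsCoprime u ((m:ℤ)) := by
    obtain ⟨c, hc⟩ := hum
    exact ⟨-1, c, by linear_combination -hc⟩
  have hcopzm : IsCoprime z ((m:ℤ)) :=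
    IsCoprime.of_isCoprime_of_dvd_left hcopum ⟨2^(V+1), by rw [huz]; ring⟩
  have hcopZ : Nat.Coprime z.natAbs m := by
    have h := Int.isCoprime_iff_gcd_eq_one.mp hcopzm
    simpa [Int.gcd] using h
  -- final gcd computation
  have hanfull : a n = (n:ℤ)^2 * (2^(V+1) * z) := by rw [hanu, huz]
  have hgcd : Int.gcd ((n:ℤ)^n) (a n) = Nat.gcd (n^n) (n^2 * (2^(V+1) * z.natAbs)) := by
    rw [Int.gcd, hanfull]
    congr 1
    · rw [Int.natAbs_mul, Int.natAbs_mul, Int.natAbs_pow, Int.natAbs_pow,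
        Int.natAbs_natCast]
      norm_num
  have hVn : V + 1 ≤ n - 2 := by
    have h1 : V < 2^V := Nat.lt_two_pow_self
    have h2 : 2^V ≤ t := Nat.le_of_dvd (by omega) ⟨t', htt'⟩
    omega
  have hpow : n^n = n^2 * (2^(V+1) * (2^(n-2-(V+1)) * m^(n-2))) := by
    have e1 : n^n = n^2 * n^(n-2) := by rw [← pow_add]; congr 1; omega
    have e2 : n^(n-2) = 2^(n-2) * m^(n-2) := by rw [hnm, mul_pow]
    have e3 : (2:ℕ)^(n-2) = 2^(V+1) * 2^(n-2-(V+1)) := by rw [← pow_add]; congr 1; omega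
    rw [e1, e2, e3, mul_assoc]
  have hcop1 : Nat.Coprime (2^(n-2-(V+1)) * m^(n-2)) z.natAbs := by
    have hZodd : ¬ 2 ∣ z.natAbs := by
      intro hdvd
      exact hzodd (Int.natAbs_dvd_natAbs.mp (by simpa using hdvd))
    have c2 : Nat.Coprime 2 z.natAbs := (Nat.prime_two.coprime_iff_not_dvd).mpr hZodd
    exact Nat.Coprime.mul (c2.pow_left _) ((hcopZ.symm).pow_left _)
  rw [hgcd, hpow, Nat.gcd_mul_left, Nat.gcd_mul_left, Nat.Coprime.gcd_eq_one hcop1]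
  ring
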